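/- arXiv:1605.04780 — 8 statements merged into one kernel-verified Lean document; each statement's English description precedes it below -/
import Mathlib

section
/- For every positive integer n, the polynomial H_n(x) = \sum_{j=0}^{\lfloor n/2 \rfloor} \binom{n-j}{j} x^j has only real zeros, and all its zeros are negative and simple. -/
/-!
Substituting `x = -1/(4c²)` turns the recurrence `H_{n+2} = H_{n+1} + x H_n` into the Chebyshev
recurrence, so that `(2c)ⁿ H_n(-1/(4c²)) = U_n(c)`. The `⌊n/2⌋` positive zeros
`cos ((k + 1)π/(n + 1))` of `U_n` therefore give `⌊n/2⌋` distinct negative zeros of `H_n`, whose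
degree is at most `⌊n/2⌋`. These are then all of its zeros, even over `ℂ`, and each is simple.
-/

open Polynomial Finset

/-- The polynomial `H_n` of the statement, with the sum extended to `j ≤ n`: the extra terms vanish,
and the uniform range makes the recurrence a coefficientwise Pascal identity. -/
noncomputable def fibPoly (R : Type*) [CommSemiring R] (n : ℕ) : R[X] :=
  ∑ j ∈ range (n + 1), C ((n - j).choose j : R) * X ^ j

section CommSemiring

variable {R : Type*} [CommSemiring R]

theorem coeff_fibPoly (n j : ℕ) : (fibPoly R n).coeff j = (n - j).choose j := by
  simp only [fibPoly, finsetSum_coeff, coeff_C_mul, coeff_X_pow, mul_ite, mul_one, mul_zero,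
    sum_ite_eq, mem_range]
  split_ifs with hj
  · rfl
  · rw [Nat.sub_eq_zero_of_le (by omega), Nat.choose_eq_zero_of_lt (by omega), Nat.cast_zero]

theorem fibPoly_zero : fibPoly R 0 = 1 := by
  simp [fibPoly]

theorem fibPoly_one : fibPoly R 1 = 1 := by
  simp [fibPoly, sum_range_succ]

theorem fibPoly_add_two (n : ℕ) : fibPoly R (n + 2) = fibPoly R (n + 1) + X * fibPoly R n := by
  ext (_ | j)
  · simp [coeff_fibPoly]
  · simp only [coeff_add, coeff_X_mul, coeff_fibPoly]
    rcases le_or_gt j n with hj | hj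
    · rw [show n + 2 - (j + 1) = n - j + 1 by omega, show n + 1 - (j + 1) = n - j by omega,
        Nat.choose_succ_succ', Nat.cast_add, add_comm]
    · rw [Nat.sub_eq_zero_of_le (by omega), Nat.sub_eq_zero_of_le (by omega),
        Nat.sub_eq_zero_of_le (by omega), Nat.choose_eq_zero_of_lt (by omega),
        Nat.choose_eq_zero_of_lt (by omega), Nat.cast_zero, zero_add]

theorem natDegree_fibPoly_le (n : ℕ) : (fibPoly R n).natDegree ≤ n / 2 := by
  refine natDegree_le_iff_coeff_eq_zero.mpr fun j hj => ?_
  rw [coeff_fibPoly, Nat.choose_eq_zero_of_lt (by omega), Nat.cast_zero]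

theorem fibPoly_ne_zero [Nontrivial R] (n : ℕ) : fibPoly R n ≠ 0 := by
  intro h
  simpa [coeff_fibPoly] using congrArg (coeff · 0) h

theorem sum_range_div_two_eq_fibPoly (n : ℕ) :
    ∑ j ∈ range (n / 2 + 1), C ((n - j).choose j : R) * X ^ j = fibPoly R n := by
  refine sum_subset (fun j hj => by simp only [mem_range] at hj ⊢; omega) fun j _ hj => ?_
  rw [mem_range, not_lt] at hj
  rw [Nat.choose_eq_zero_of_lt (by omega), Nat.cast_zero, C_0, zero_mul]

end CommSemiring

open Chebyshev in
theorem pow_mul_eval_fibPoly_eq_eval_U {K : Type*} [Field K] {c : K} (hc : 2 * c ≠ 0) (n : ℕ) :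
    (2 * c) ^ n * (fibPoly K n).eval (-((2 * c) ^ 2)⁻¹) = (U K n).eval c := by
  induction n using Nat.twoStepInduction with
  | zero => simp [fibPoly_zero]
  | one => simp [fibPoly_one]
  | more n ih₀ ih₁ =>
    have hx : (2 * c) ^ 2 * -((2 * c) ^ 2)⁻¹ = -1 := by
      rw [mul_neg, mul_inv_cancel₀ (pow_ne_zero 2 hc)]
    push_cast at ih₁ ⊢
    rw [U_add_two, fibPoly_add_two, eval_sub, eval_mul, eval_mul, eval_X, ← ih₀, ← ih₁]
    simp only [eval_add, eval_mul, eval_X, eval_ofNat]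
    linear_combination (2 * c) ^ n * eval (-((2 * c) ^ 2)⁻¹) (fibPoly K n) * hx

section Roots

open Real Chebyshev

theorem isRoot_fibPoly_of_isRoot_U {n : ℕ} {c : ℝ} (hc : c ≠ 0) (h : (U ℝ n).IsRoot c) :
    (fibPoly ℝ n).IsRoot (-((2 * c) ^ 2)⁻¹) := by
  have h2c : 2 * c ≠ 0 := mul_ne_zero two_ne_zero hc
  have := pow_mul_eval_fibPoly_eq_eval_U h2c n
  rw [h.eq_zero] at this
  exact (mul_eq_zero.mp this).resolve_left (pow_ne_zero n h2c)

/-- The substitution `c ↦ -1/(4c²)` sends the positive roots `cos ((k + 1)π/(n + 1))`, `k < n/2`,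
of `U_n` to the roots of `H_n`. -/
noncomputable def fibRoot (n k : ℕ) : ℝ :=
  -((2 * cos ((k + 1) * π / (n + 1))) ^ 2)⁻¹

theorem cos_pos_of_lt_div_two {n k : ℕ} (hk : k < n / 2) : 0 < cos ((k + 1) * π / (n + 1)) := by
  have hpos : 0 < (k + 1) * π / (n + 1) := by positivity
  refine cos_pos_of_mem_Ioo ⟨by linarith [pi_pos], ?_⟩
  rw [div_lt_div_iff₀ (by positivity) two_pos]
  have : (2 * (k + 1) : ℝ) < n + 1 := by exact_mod_cast (by omega : 2 * (k + 1) < n + 1)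
  nlinarith [pi_pos]

theorem fibRoot_neg {n k : ℕ} (hk : k < n / 2) : fibRoot n k < 0 := by
  have := cos_pos_of_lt_div_two hk
  rw [fibRoot, neg_lt_zero]
  positivity

theorem isRoot_fibPoly_fibRoot {n k : ℕ} (hk : k < n / 2) : (fibPoly ℝ n).IsRoot (fibRoot n k) := by
  refine isRoot_fibPoly_of_isRoot_U (cos_pos_of_lt_div_two hk).ne' ((mem_roots'.mp ?_).2)
  rw [roots_U_real, Finset.mem_val, mem_image]
  exact ⟨k, mem_range.mpr (by omega), rfl⟩

theorem injOn_fibRoot (n : ℕ) : Set.InjOn (fibRoot n) (range (n / 2)) := by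
  have hcos : Set.InjOn (fun k : ℕ ↦ cos ((k + 1) * π / (n + 1))) (range n) :=
    (range n).nodup_map_iff_injOn.mp (roots_U_real_nodup n)
  intro a ha b hb hab
  have ha' := cos_pos_of_lt_div_two (mem_range.mp ha)
  have hb' := cos_pos_of_lt_div_two (mem_range.mp hb)
  have hsub : (range (n / 2) : Set ℕ) ⊆ range n :=
    coe_subset.mpr (range_subset_range.mpr (Nat.div_le_self n 2))
  refine hcos (hsub ha) (hsub hb) ?_
  rw [fibRoot, fibRoot, neg_inj, inv_inj, pow_left_inj₀ (by positivity) (by positivity) two_ne_zero,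
    mul_right_inj' two_ne_zero] at hab
  exact hab

theorem roots_fibPoly (n : ℕ) : (fibPoly ℝ n).roots = ((range (n / 2)).image (fibRoot n)).val := by
  refine roots_eq_of_natDegree_le_card_of_ne_zero (fun x hx ↦ ?_) ?_ (fibPoly_ne_zero n)
  · obtain ⟨k, hk, rfl⟩ := mem_image.mp hx
    exact isRoot_fibPoly_fibRoot (mem_range.mp hk)
  · rw [card_image_of_injOn (injOn_fibRoot n), card_range]
    exact natDegree_fibPoly_le n

theorem card_roots_fibPoly (n : ℕ) :
    Multiset.card (fibPoly ℝ n).roots = (fibPoly ℝ n).natDegree := by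
  refine le_antisymm (card_roots' _) ?_
  rw [roots_fibPoly, card_val, card_image_of_injOn (injOn_fibRoot n), card_range]
  exact natDegree_fibPoly_le n

end Roots

theorem im_eq_zero_of_aeval_eq_zero {p : ℝ[X]} (hp : p ≠ 0)
    (hroots : Multiset.card p.roots = p.natDegree) {z : ℂ} (hz : aeval z p = 0) : z.im = 0 := by
  have hinj := (algebraMap ℝ ℂ).injective
  have hz' : z ∈ (p.map (algebraMap ℝ ℂ)).roots := by
    rwa [mem_roots_map_of_injective hinj hp, ← aeval_def]
  rw [← roots_map_of_injective_of_card_eq_natDegree hinj hroots] at hz'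
  obtain ⟨x, -, rfl⟩ := Multiset.mem_map.mp hz'
  exact Complex.ofReal_im x

theorem stmt_0_general (n : ℕ) :
    let H : Polynomial ℝ := ∑ j ∈ Finset.range (n / 2 + 1), C (((n - j).choose j : ℝ)) * X ^ j
    (∀ z : ℂ, aeval z H = 0 → z.im = 0) ∧
    (∀ x : ℝ, H.IsRoot x → x < 0) ∧
    (∀ x : ℝ, H.rootMultiplicity x ≤ 1) := by
  intro H
  rw [show H = fibPoly ℝ n from sum_range_div_two_eq_fibPoly n]
  refine ⟨fun z ↦ im_eq_zero_of_aeval_eq_zero (fibPoly_ne_zero n) (card_roots_fibPoly n),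
    fun x hx ↦ ?_, fun x ↦ ?_⟩
  · rw [← mem_roots (fibPoly_ne_zero n), roots_fibPoly, Finset.mem_val] at hx
    obtain ⟨k, hk, rfl⟩ := mem_image.mp hx
    exact fibRoot_neg (mem_range.mp hk)
  · rw [← count_roots, roots_fibPoly]
    exact Multiset.nodup_iff_count_le_one.mp (nodup _) x

theorem stmt_0 (n : ℕ) (hn : 0 < n) :
    let H : Polynomial ℝ := ∑ j ∈ Finset.range (n / 2 + 1), C (((n - j).choose j : ℝ)) * X ^ j
    (∀ z : ℂ, aeval z H = 0 → z.im = 0) ∧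
    (∀ x : ℝ, H.IsRoot x → x < 0) ∧
    (∀ x : ℝ, H.rootMultiplicity x ≤ 1) :=
  stmt_0_general n
end

section
/- For every positive integer n, the sequence \{1/(n-k)!\}_{k \ge 0} (interpreted as 0 when k > n) is a multiplier sequence; that is, for every real polynomial \sum_{k=0}^m a_k x^k with only real zeros, the polynomial \sum_{k=0}^m \frac{a_k}{(n-k)!} x^k is either identically zero or has only real zeros. -/
/-!
Let `p = ∑ aₖ Xᵏ` and let `D` be differentiation. Then `p(D) Xⁿ = ∑ aₖ n!/(n-k)! X^(n-k)`, whose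
reflection in degree `n` is `n!` times the polynomial in question. Since `p` splits over `ℝ`, the
operator `p(D)` is a product of constants and factors `D + a`, and each `D + a` preserves
real-rootedness: by Rolle's theorem applied to `t ↦ e^(a t) f(t)`, `f' + a f` loses at most one
real root of `f`, which forces it to split. Reflection preserves splitting as well.
-/

open Polynomial Finset

theorem Nat.cast_descFactorial_div_factorial {K : Type*} [Field K] [CharZero K] (n k : ℕ) :
    (n.descFactorial k : K) / n.factorial = if k ≤ n then (1 : K) / (n - k).factorial else 0 := by
  split_ifs with hk
  · have hne : (n.descFactorial k : K) ≠ 0 :=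
      Nat.cast_ne_zero.2 (Nat.descFactorial_eq_zero_iff_lt.not.2 (not_lt.2 hk))
    rw [← Nat.factorial_mul_descFactorial hk, Nat.cast_mul, mul_comm, div_mul_cancel_left₀ hne,
      one_div]
  · simp [Nat.descFactorial_eq_zero_iff_lt.2 (not_le.1 hk)]

namespace Polynomial

theorem reflect_sum {R ι : Type*} [Semiring R] (N : ℕ) (s : Finset ι) (f : ι → R[X]) :
    reflect N (∑ i ∈ s, f i) = ∑ i ∈ s, reflect N (f i) :=
  map_sum ({ toFun := reflect N, map_zero' := reflect_zero, map_add' := (reflect_add · · N) } :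
    R[X] →+ R[X]) f s

section Field

variable {K : Type*} [Field K]

theorem splits_of_natDegree_le_card_roots_add_one {p : K[X]}
    (h : p.natDegree ≤ Multiset.card p.roots + 1) : p.Splits := by
  obtain ⟨q, hpq, hdeg, -⟩ := p.exists_prod_multiset_X_sub_C_mul
  rw [← hpq]
  refine (Splits.multisetProd fun g hg => ?_).mul (Splits.of_natDegree_le_one (by omega))
  obtain ⟨x, -, rfl⟩ := Multiset.mem_map.1 hg
  exact Splits.X_sub_C x

theorem Splits.reverse {f : K[X]} (hf : f.Splits) : f.reverse.Splits := by
  have hone : (1 : K[X]).reverse = 1 := by rw [← C_1, reverse_C]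
  induction hf using Submonoid.closure_induction with
  | mem f hf =>
    rcases hf with ⟨a, rfl⟩ | ⟨a, rfl⟩
    · simp
    · have hX : (X : K[X]).reverse = 1 := by simpa [hone] using reverse_mul_X (1 : K[X])
      rw [reverse_add_C, hX]
      exact Splits.of_natDegree_le_one (by compute_degree!)
  | one => rw [hone]; exact Splits.one
  | mul f g _ _ hf hg => rw [reverse_mul_of_domain]; exact hf.mul hg

theorem Splits.reflect {f : K[X]} (hf : f.Splits) {N : ℕ} (hN : f.natDegree ≤ N) :
    (f.reflect N).Splits := by
  have hone : (1 : K[X]).natDegree ≤ N - f.natDegree := by simp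
  have hreflect : f.reflect N = f.reverse * X ^ (N - f.natDegree) := by
    rw [← reflect_one, Polynomial.reverse, ← reflect_mul _ _ le_rfl hone, mul_one,
      Nat.add_sub_cancel' hN]
  rw [hreflect]
  exact hf.reverse.mul (Splits.X_pow _)

end Field

section CommRing

variable {R : Type*} [CommRing R]

theorem rootMultiplicity_sub_one_le_rootMultiplicity_derivative_add_C_mul (f : R[X]) (a x : R)
    (hg : derivative f + C a * f ≠ 0) :
    f.rootMultiplicity x - 1 ≤ (derivative f + C a * f).rootMultiplicity x := by
  rw [le_rootMultiplicity_iff hg]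
  exact dvd_add (pow_sub_one_dvd_derivative_of_pow_dvd (f.pow_rootMultiplicity_dvd x))
    (((pow_dvd_pow _ (Nat.sub_le _ _)).trans (f.pow_rootMultiplicity_dvd x)).mul_left _)

theorem card_roots_le_card_roots_add_one_of_interleaved [IsDomain R] [LinearOrder R]
    {f g : R[X]} (hg : g ≠ 0)
    (hmult : ∀ x, f.rootMultiplicity x - 1 ≤ g.rootMultiplicity x)
    (hbetween : ∀ x y, f.IsRoot x → f.IsRoot y → x < y → ∃ z ∈ Set.Ioo x y, g.IsRoot z) :
    Multiset.card f.roots ≤ Multiset.card g.roots + 1 := by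
  have hdistinct : f.roots.toFinset.card ≤ (g.roots.toFinset \ f.roots.toFinset).card + 1 := by
    refine Finset.card_le_sdiff_of_interleaved fun x hx y hy hxy _ => ?_
    rw [Multiset.mem_toFinset, mem_roots'] at hx hy
    obtain ⟨z, hz, hgz⟩ := hbetween x y hx.2 hy.2 hxy
    exact ⟨z, by rwa [Multiset.mem_toFinset, mem_roots hg], hz⟩
  calc
    Multiset.card f.roots = ∑ x ∈ f.roots.toFinset, f.roots.count x :=
      (Multiset.toFinset_sum_count_eq _).symm
    _ = ∑ x ∈ f.roots.toFinset, (f.roots.count x - 1 + 1) :=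
      (Eq.symm <| Finset.sum_congr rfl fun _ hx => tsub_add_cancel_of_le <|
        Nat.succ_le_iff.2 <| Multiset.count_pos.2 <| Multiset.mem_toFinset.1 hx)
    _ = (∑ x ∈ f.roots.toFinset, (f.rootMultiplicity x - 1)) + f.roots.toFinset.card := by
      simp only [Finset.sum_add_distrib, Finset.card_eq_sum_ones, count_roots]
    _ ≤ (∑ x ∈ f.roots.toFinset, g.rootMultiplicity x) +
          ((g.roots.toFinset \ f.roots.toFinset).card + 1) :=
      add_le_add (Finset.sum_le_sum fun x _ => hmult x) hdistinct
    _ ≤ (∑ x ∈ f.roots.toFinset, g.roots.count x) +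
          ((∑ x ∈ g.roots.toFinset \ f.roots.toFinset, g.roots.count x) + 1) := by
      simp only [← count_roots, Finset.card_eq_sum_ones]
      gcongr with x hx
      rw [Nat.succ_le_iff, Multiset.count_pos, ← Multiset.mem_toFinset]
      exact (Finset.mem_sdiff.1 hx).1
    _ = Multiset.card g.roots + 1 := by
      rw [← add_assoc, ← Finset.sum_union Finset.disjoint_sdiff, Finset.union_sdiff_self_eq_union,
        ← Multiset.toFinset_sum_count_eq, ← Finset.sum_subset Finset.subset_union_right]
      intro x _ hx
      simpa only [Multiset.mem_toFinset, Multiset.count_eq_zero] using hx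

theorem aeval_derivative_C_mul_X_pow_apply_X_pow (c : R) (k n : ℕ) :
    aeval (derivative : Module.End R R[X]) (C c * X ^ k) (X ^ n) =
      C (c * n.descFactorial k) * X ^ (n - k) := by
  rw [map_mul, aeval_C, aeval_X_pow, Module.End.mul_apply, Module.End.pow_apply,
    Module.algebraMap_end_apply, iterate_derivative_X_pow_eq_C_mul, smul_eq_C_mul, C_mul, mul_assoc]

theorem reflect_C_mul_descFactorial_mul_X_pow_sub (c : R) (k n : ℕ) :
    reflect n (C (c * n.descFactorial k) * X ^ (n - k)) = C (c * n.descFactorial k) * X ^ k := by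
  rcases le_or_gt k n with hk | hk
  · rw [reflect_C_mul_X_pow, revAt_le (Nat.sub_le n k), Nat.sub_sub_self hk]
  · simp [Nat.descFactorial_eq_zero_iff_lt.2 hk]

end CommRing

theorem exists_isRoot_derivative_add_C_mul_mem_Ioo (f : ℝ[X]) (a : ℝ) {x y : ℝ} (hxy : x < y)
    (hx : f.IsRoot x) (hy : f.IsRoot y) :
    ∃ z ∈ Set.Ioo x y, (derivative f + C a * f).IsRoot z := by
  have hderiv (t : ℝ) : HasDerivAt (fun t => Real.exp (a * t) * f.eval t)
      (Real.exp (a * t) * (derivative f + C a * f).eval t) t := by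
    have hexp : HasDerivAt (fun t => Real.exp (a * t)) (Real.exp (a * t) * a) t := by
      simpa using ((hasDerivAt_id t).const_mul a).exp
    refine (hexp.mul (f.hasDerivAt t)).congr_deriv ?_
    simp only [eval_add, eval_mul, eval_C]
    ring
  obtain ⟨z, hz, hz0⟩ := exists_hasDerivAt_eq_zero hxy
    (by fun_prop) (by simp [hx.eq_zero, hy.eq_zero]) fun t _ => hderiv t
  exact ⟨z, hz, (mul_eq_zero.1 hz0).resolve_left (Real.exp_ne_zero _)⟩

theorem Splits.derivative_add_C_mul {f : ℝ[X]} (hf : f.Splits) (a : ℝ) :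
    (derivative f + C a * f).Splits := by
  rcases eq_or_ne (derivative f + C a * f) 0 with hg | hg
  · rw [hg]; exact Splits.zero
  refine splits_of_natDegree_le_card_roots_add_one ?_
  calc (derivative f + C a * f).natDegree
      ≤ f.natDegree := natDegree_add_le_of_degree_le (natDegree_derivative_le f |>.trans
        (Nat.sub_le _ _)) (natDegree_C_mul_le a f)
    _ = Multiset.card f.roots := hf.natDegree_eq_card_roots
    _ ≤ Multiset.card (derivative f + C a * f).roots + 1 :=
      card_roots_le_card_roots_add_one_of_interleaved hg
        (fun x => rootMultiplicity_sub_one_le_rootMultiplicity_derivative_add_C_mul f a x hg)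
        (fun x y hx hy hxy => exists_isRoot_derivative_add_C_mul_mem_Ioo f a hxy hx hy)

theorem Splits.aeval_derivative_apply {p f : ℝ[X]} (hp : p.Splits) (hf : f.Splits) :
    (aeval (derivative : Module.End ℝ ℝ[X]) p f).Splits := by
  induction hp using Submonoid.closure_induction generalizing f with
  | mem p hp =>
    rcases hp with ⟨a, rfl⟩ | ⟨a, rfl⟩
    · simpa [smul_eq_C_mul] using hf.C_mul a
    · simpa [smul_eq_C_mul] using hf.derivative_add_C_mul a
  | one => simpa using hf
  | mul p q _ _ hp hq =>
    rw [map_mul, Module.End.mul_apply]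
    exact hp (hq hf)

theorem splits_of_forall_aeval_eq_zero_im_eq_zero {p : ℝ[X]}
    (h : ∀ z : ℂ, aeval z p = 0 → z.im = 0) : p.Splits := by
  refine Splits.of_splits_map (algebraMap ℝ ℂ) (IsAlgClosed.splits _) fun z hz => ?_
  have hz' : aeval z p = 0 := by
    rw [aeval_def, ← eval_map]
    exact (mem_roots'.1 hz).2
  exact ⟨z.re, Complex.ext (by simp) (by simp [h z hz'])⟩

theorem Splits.im_eq_zero_of_aeval_eq_zero {p : ℝ[X]} (hp : p.Splits) (hp0 : p ≠ 0) {z : ℂ}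
    (hz : aeval z p = 0) : z.im = 0 := by
  obtain ⟨x, rfl⟩ := hp.mem_range_of_isRoot hp0 (i := algebraMap ℝ ℂ)
    (by rwa [IsRoot, eval_map_algebraMap])
  simp

end Polynomial

theorem stmt_4_general (n : ℕ) (m : ℕ) (a : ℕ → ℝ)
    (h : ∀ z : ℂ, aeval z (∑ k ∈ Finset.range (m + 1), C (a k) * X ^ k) = 0 → z.im = 0) :
    (∑ k ∈ Finset.range (m + 1),
        C ((if k ≤ n then (1 : ℝ) / (n - k).factorial else 0) * a k) * X ^ k) = 0 ∨
    ∀ z : ℂ, aeval z (∑ k ∈ Finset.range (m + 1),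
        C ((if k ≤ n then (1 : ℝ) / (n - k).factorial else 0) * a k) * X ^ k) = 0 → z.im = 0 := by
  set Q := aeval (derivative : Module.End ℝ ℝ[X]) (∑ k ∈ range (m + 1), C (a k) * X ^ k) (X ^ n)
  have hQ : Q = ∑ k ∈ range (m + 1), C (a k * n.descFactorial k) * X ^ (n - k) := by
    simp only [Q, map_sum, LinearMap.sum_apply, aeval_derivative_C_mul_X_pow_apply_X_pow]
  have hQdeg : Q.natDegree ≤ n := hQ ▸ natDegree_sum_le_of_forall_le _ _
    fun k _ => (natDegree_C_mul_X_pow_le _ _).trans (Nat.sub_le n k)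
  have hQsplits : Q.Splits :=
    (splits_of_forall_aeval_eq_zero_im_eq_zero h).aeval_derivative_apply (Splits.X_pow n)
  have ht : ∑ k ∈ range (m + 1),
      C ((if k ≤ n then (1 : ℝ) / (n - k).factorial else 0) * a k) * X ^ k =
        C (1 / n.factorial : ℝ) * reflect n Q := by
    rw [hQ, reflect_sum, mul_sum]
    refine sum_congr rfl fun k _ => ?_
    rw [reflect_C_mul_descFactorial_mul_X_pow_sub, ← mul_assoc, ← C_mul,
      ← Nat.cast_descFactorial_div_factorial]
    congr 2
    ring
  rw [ht]
  exact or_iff_not_imp_left.2 fun ht0 _ hz =>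
    ((hQsplits.reflect hQdeg).C_mul _).im_eq_zero_of_aeval_eq_zero ht0 hz

theorem stmt_4 (n : ℕ) (hn : 0 < n) (m : ℕ) (a : ℕ → ℝ)
    (h : ∀ z : ℂ, aeval z (∑ k ∈ Finset.range (m + 1), C (a k) * X ^ k) = 0 → z.im = 0) :
    (∑ k ∈ Finset.range (m + 1),
        C ((if k ≤ n then (1 : ℝ) / (n - k).factorial else 0) * a k) * X ^ k) = 0 ∨
    ∀ z : ℂ, aeval z (∑ k ∈ Finset.range (m + 1),
        C ((if k ≤ n then (1 : ℝ) / (n - k).factorial else 0) * a k) * X ^ k) = 0 → z.im = 0 :=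
  stmt_4_general n m a h
end

section
/- The sequence \{1/k!\}_{k \ge 0} is a multiplier sequence: for every real polynomial \sum_{k=0}^m a_k x^k with only real zeros, the polynomial \sum_{k=0}^m \frac{a_k}{k!} x^k is either identically zero or has only real zeros. -/
/-!
Laguerre's argument. For `p = ∑ aₖ Xᵏ` of degree at most `m`, the reversal `P = Xᵐ p(1/X)` is
again real-rooted, and since `D^(m-k) Xᵐ = (m!/k!) Xᵏ`, the operator `P(D)` sends `Xᵐ` to
`m! ∑ (aₖ/k!) Xᵏ`. Factor `P = c ∏ (X - t)` over its real roots. Each factor `D - t` preserves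
real-rootedness: from `(e^(-tx) f)' = e^(-tx) (f' - t f)`, Rolle's theorem gives a root of
`f' - t f` strictly between consecutive roots of `f`, and a root of `f` of multiplicity `μ` is a
root of `f' - t f` of multiplicity at least `μ - 1`. So `f' - t f` has at least `deg f - 1` real
roots, and a real polynomial all of whose roots but at most one are real has only real roots.
-/

open Polynomial Finset

namespace Polynomial

theorem splits_of_natDegree_le_card_roots_add_one_s5 {K : Type*} [Field K] {f : K[X]}
    (h : f.natDegree ≤ Multiset.card f.roots + 1) : f.Splits := by
  obtain ⟨q, hfq, hdeg, -⟩ := exists_prod_multiset_X_sub_C_mul f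
  rw [← hfq]
  exact (Splits.multisetProd fun g hg => by
    obtain ⟨t, -, rfl⟩ := Multiset.mem_map.1 hg
    exact Splits.X_sub_C t).mul (Splits.of_natDegree_le_one (by omega))

theorem splits_iff_forall_aeval_complex_eq_zero_im_eq_zero {f : ℝ[X]} (hf : f ≠ 0) :
    f.Splits ↔ ∀ z : ℂ, aeval z f = 0 → z.im = 0 := by
  constructor
  · intro hs z hz
    obtain ⟨x, rfl⟩ := hs.mem_range_of_isRoot hf (i := algebraMap ℝ ℂ) (x := z)
      (by rwa [IsRoot, eval_map_algebraMap])
    simp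
  · intro h
    refine Splits.of_splits_map (algebraMap ℝ ℂ) (IsAlgClosed.splits _) fun z hz => ?_
    rw [mem_roots (map_ne_zero hf), IsRoot, eval_map_algebraMap] at hz
    exact ⟨z.re, Complex.ext (by simp) (by simp [h z hz])⟩

theorem forall_aeval_reflect_eq_zero_im_eq_zero {f : ℝ[X]} {N : ℕ} (hN : f.natDegree ≤ N)
    (h : ∀ z : ℂ, aeval z f = 0 → z.im = 0) (z : ℂ) (hz : aeval z (reflect N f) = 0) :
    z.im = 0 := by
  rcases eq_or_ne z 0 with rfl | hz0
  · simp
  have : Invertible z⁻¹ := invertibleOfNonzero (inv_ne_zero hz0)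
  have hinv : aeval z⁻¹ f = 0 := by
    rw [aeval_def, ← eval₂_reflect_eq_zero_iff _ _ N f hN, invOf_eq_inv, inv_inv, ← aeval_def, hz]
  have him := h _ hinv
  simp only [Complex.inv_im, neg_div, neg_eq_zero, div_eq_zero_iff] at him
  exact him.resolve_right (by simpa using hz0)

theorem rootMultiplicity_sub_one_le_rootMultiplicity_derivative_sub_C_mul {R : Type*}
    [CommRing R] [NoZeroDivisors R] [CharZero R] (f : R[X]) (r t : R)
    (hg : derivative f - C r * f ≠ 0) :
    f.rootMultiplicity t - 1 ≤ (derivative f - C r * f).rootMultiplicity t := by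
  rw [le_rootMultiplicity_iff hg]
  have hf : (X - C t) ^ (f.rootMultiplicity t - 1) ∣ f :=
    (pow_dvd_pow _ (Nat.sub_le _ _)).trans (pow_rootMultiplicity_dvd f t)
  have hf' : (X - C t) ^ (f.rootMultiplicity t - 1) ∣ derivative f :=
    (pow_dvd_pow _ (rootMultiplicity_sub_one_le_derivative_rootMultiplicity f t)).trans
      (pow_rootMultiplicity_dvd _ t)
  exact dvd_sub hf' (hf.mul_left _)

theorem hasDerivAt_exp_neg_mul_eval (f : ℝ[X]) (r x : ℝ) :
    HasDerivAt (fun t => Real.exp (-r * t) * f.eval t)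
      (Real.exp (-r * x) * (derivative f - C r * f).eval x) x := by
  have hexp : HasDerivAt (fun t => Real.exp (-r * t)) (Real.exp (-r * x) * -r) x := by
    simpa using ((hasDerivAt_id x).const_mul (-r)).exp
  refine (hexp.fun_mul (f.hasDerivAt x)).congr_deriv ?_
  simp only [eval_sub, eval_mul, eval_C]
  ring

theorem card_roots_toFinset_le_card_roots_derivative_sub_C_mul_sdiff_roots_succ (f : ℝ[X])
    (r : ℝ) (hg : derivative f - C r * f ≠ 0) :
    f.roots.toFinset.card ≤
      ((derivative f - C r * f).roots.toFinset \ f.roots.toFinset).card + 1 := by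
  have hf : f ≠ 0 := by rintro rfl; simp at hg
  refine Finset.card_le_sdiff_of_interleaved fun x hx y hy hxy _ => ?_
  rw [Multiset.mem_toFinset, mem_roots hf] at hx hy
  obtain ⟨z, hz, hz0⟩ := exists_hasDerivAt_eq_zero hxy
    ((Real.continuous_exp.comp (continuous_const.mul continuous_id)).mul
      f.continuous).continuousOn
    (by simp [hx.eq_zero, hy.eq_zero]) fun t _ => hasDerivAt_exp_neg_mul_eval f r t
  refine ⟨z, ?_, hz⟩
  rw [Multiset.mem_toFinset, mem_roots hg, IsRoot]
  exact (mul_eq_zero.1 hz0).resolve_left (Real.exp_ne_zero _)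

theorem card_roots_le_card_roots_derivative_sub_C_mul_add_one (f : ℝ[X]) (r : ℝ)
    (hg : derivative f - C r * f ≠ 0) :
    Multiset.card f.roots ≤ Multiset.card (derivative f - C r * f).roots + 1 := by
  set g := derivative f - C r * f
  calc Multiset.card f.roots
      = ∑ x ∈ f.roots.toFinset, (f.roots.count x - 1 + 1) := by
        rw [← Multiset.toFinset_sum_count_eq]
        refine Finset.sum_congr rfl fun x hx => (Nat.sub_add_cancel ?_).symm
        exact Multiset.one_le_count_iff_mem.2 (Multiset.mem_toFinset.1 hx)
    _ ≤ ∑ x ∈ f.roots.toFinset, g.roots.count x +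
          ((g.roots.toFinset \ f.roots.toFinset).card + 1) := by
        rw [Finset.sum_add_distrib, Finset.sum_const, smul_eq_mul, mul_one]
        gcongr with x
        · rw [count_roots, count_roots]
          exact rootMultiplicity_sub_one_le_rootMultiplicity_derivative_sub_C_mul f r x hg
        · exact card_roots_toFinset_le_card_roots_derivative_sub_C_mul_sdiff_roots_succ f r hg
    _ ≤ ∑ x ∈ f.roots.toFinset, g.roots.count x +
          (∑ x ∈ g.roots.toFinset \ f.roots.toFinset, g.roots.count x + 1) := by
        rw [Finset.card_eq_sum_ones]
        gcongr with x hx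
        exact Multiset.one_le_count_iff_mem.2 (Multiset.mem_toFinset.1 (Finset.mem_sdiff.1 hx).1)
    _ = ∑ x ∈ f.roots.toFinset ∪ g.roots.toFinset, g.roots.count x + 1 := by
        rw [← add_assoc, ← Finset.sum_union Finset.disjoint_sdiff,
          Finset.union_sdiff_self_eq_union]
    _ = Multiset.card g.roots + 1 := by
        rw [← Multiset.toFinset_sum_count_eq, ← Finset.sum_subset Finset.subset_union_right]
        intro x _ hx
        simpa only [Multiset.mem_toFinset, Multiset.count_eq_zero] using hx

theorem Splits.derivative_sub_C_mul {f : ℝ[X]} (hf : f.Splits) (r : ℝ) :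
    (derivative f - C r * f).Splits := by
  rcases eq_or_ne (derivative f - C r * f) 0 with hg | hg
  · rw [hg]; exact Splits.zero
  refine splits_of_natDegree_le_card_roots_add_one_s5 ?_
  calc (derivative f - C r * f).natDegree
      ≤ f.natDegree := by
        simpa using natDegree_sub_le_of_le ((natDegree_derivative_le f).trans (Nat.sub_le _ _))
          (natDegree_C_mul_le r f)
    _ = Multiset.card f.roots := hf.natDegree_eq_card_roots
    _ ≤ _ := card_roots_le_card_roots_derivative_sub_C_mul_add_one f r hg

theorem Splits.aeval_derivative {P f : ℝ[X]} (hP : P.Splits) (hf : f.Splits) :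
    (aeval (derivative : Module.End ℝ ℝ[X]) P f).Splits := by
  have hprod : ∀ s : Multiset ℝ,
      (aeval (derivative : Module.End ℝ ℝ[X]) (s.map fun t => X - C t).prod f).Splits := by
    intro s
    induction s using Multiset.induction_on with
    | empty => simpa using hf
    | cons t s ih =>
      simpa [Module.algebraMap_end_apply, smul_eq_C_mul] using ih.derivative_sub_C_mul t
  rw [hP.eq_prod_roots, map_mul, aeval_C, Module.End.mul_apply, Module.algebraMap_end_apply,
    smul_eq_C_mul]
  exact (Splits.C _).mul (hprod _)

theorem reflect_sum_C_mul_X_pow {R : Type*} [Semiring R] (m : ℕ) (a : ℕ → R) :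
    reflect m (∑ k ∈ range (m + 1), C (a k) * X ^ k) =
      ∑ k ∈ range (m + 1), C (a k) * X ^ (m - k) := by
  let reflectHom : R[X] →+ R[X] :=
    { toFun := reflect m, map_zero' := reflect_zero, map_add' := (reflect_add · · m) }
  refine (map_sum reflectHom (fun k => C (a k) * X ^ k) (range (m + 1))).trans
    (Finset.sum_congr rfl fun k hk => ?_)
  rw [AddMonoidHom.coe_mk, ZeroHom.coe_mk, reflect_C_mul_X_pow,
    revAt_le (Nat.lt_succ_iff.1 (mem_range.1 hk))]

theorem aeval_derivative_reflect_sum_C_mul_X_pow {K : Type*} [Field K] [CharZero K] (m : ℕ)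
    (a : ℕ → K) :
    aeval (derivative : Module.End K K[X]) (reflect m (∑ k ∈ range (m + 1), C (a k) * X ^ k))
        (X ^ m) =
      C (m.factorial : K) * ∑ k ∈ range (m + 1), C ((1 / k.factorial : K) * a k) * X ^ k := by
  rw [reflect_sum_C_mul_X_pow, map_sum, LinearMap.sum_apply, Finset.mul_sum]
  refine Finset.sum_congr rfl fun k hk => ?_
  have hkm : k ≤ m := Nat.lt_succ_iff.1 (mem_range.1 hk)
  have hfact : (k.factorial : K) * m.descFactorial (m - k) = m.factorial := by
    have := Nat.factorial_mul_descFactorial (Nat.sub_le m k)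
    rw [Nat.sub_sub_self hkm] at this
    exact_mod_cast this
  rw [map_mul, aeval_C, aeval_X_pow, Module.End.mul_apply, Module.algebraMap_end_apply,
    Module.End.pow_apply, iterate_derivative_X_pow_eq_smul, Nat.sub_sub_self hkm, smul_smul,
    smul_eq_C_mul, ← mul_assoc, ← C_mul]
  congr 2
  have hk0 : (k.factorial : K) ≠ 0 := Nat.cast_ne_zero.2 k.factorial_ne_zero
  field_simp
  linear_combination a k * hfact

end Polynomial

theorem stmt_5 (m : ℕ) (a : ℕ → ℝ)
    (h : ∀ z : ℂ, aeval z (∑ k ∈ Finset.range (m + 1), C (a k) * X ^ k) = 0 → z.im = 0) :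
    (∑ k ∈ Finset.range (m + 1), C ((1 / k.factorial : ℝ) * a k) * X ^ k) = 0 ∨
    ∀ z : ℂ, aeval z (∑ k ∈ Finset.range (m + 1),
        C ((1 / k.factorial : ℝ) * a k) * X ^ k) = 0 → z.im = 0 := by
  set p : ℝ[X] := ∑ k ∈ range (m + 1), C (a k) * X ^ k
  set q : ℝ[X] := ∑ k ∈ range (m + 1), C ((1 / k.factorial : ℝ) * a k) * X ^ k
  have hp0 : p ≠ 0 := fun hp => by simpa using h Complex.I (by rw [hp, map_zero])
  have hpdeg : p.natDegree ≤ m := natDegree_sum_le_of_forall_le _ _ fun k hk =>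
    natDegree_C_mul_X_pow_le _ _ |>.trans (Nat.lt_succ_iff.1 (mem_range.1 hk))
  have hP : (reflect m p).Splits :=
    (splits_iff_forall_aeval_complex_eq_zero_im_eq_zero (by simpa using hp0)).2
      (forall_aeval_reflect_eq_zero_im_eq_zero hpdeg h)
  have hmq : (C (m.factorial : ℝ) * q).Splits := by
    rw [← aeval_derivative_reflect_sum_C_mul_X_pow]
    exact hP.aeval_derivative (Splits.X_pow m)
  have hq : q.Splits :=
    (splits_mul_iff_right (C_ne_zero.2 (Nat.cast_ne_zero.2 m.factorial_ne_zero))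
      (Splits.C _)).1 hmq
  exact or_iff_not_imp_left.2 fun hq0 =>
    (splits_iff_forall_aeval_complex_eq_zero_im_eq_zero hq0).1 hq
end

section
/- Let n \ge 2 be an integer and let \xi_1, \ldots, \xi_{\lfloor n/2 \rfloor} be nonnegative real numbers, not all zero. Then the polynomial \ell(x) = \sum_{i=1}^{\lfloor n/2 \rfloor} \xi_i x^i (1+x)^{n-2i} has only real zeros if and only if the polynomial \xi(x) = \sum_{i=1}^{\lfloor n/2 \rfloor} \xi_i x^i has only real zeros. -/
/-! Substituting `w = x / (1 + x)²` gives `ℓ(x) = (1 + x)ⁿ ξ(w)` away from `x = -1`, and every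
`w` is attained this way. A real `x` gives a real `w`, so real-rootedness of `ℓ` passes to `ξ`.
Conversely, nonnegative coefficients force every real root `w` of `ξ` to be `≤ 0`, and for such
`w` both solutions of `w (1 + x)² = x` are real (the discriminant is `1 - 4w > 0`). -/

open Polynomial Finset

theorem aeval_sum_C_mul_X_pow_mul_one_add_X_pow {R K : Type*} [CommRing R] [Field K]
    [Algebra R K] {n : ℕ} {s : Finset ℕ} (hs : ∀ i ∈ s, 2 * i ≤ n) (c : ℕ → R) {z : K}
    (hz : 1 + z ≠ 0) :
    aeval z (∑ i ∈ s, C (c i) * X ^ i * (1 + X) ^ (n - 2 * i)) =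
      (1 + z) ^ n * aeval (z / (1 + z) ^ 2) (∑ i ∈ s, C (c i) * X ^ i) := by
  simp only [map_sum, map_mul, aeval_C, map_pow, aeval_X, map_add, map_one, mul_sum]
  refine sum_congr rfl fun i hi => ?_
  rw [← Nat.sub_add_cancel (hs i hi), pow_add, div_pow, ← pow_mul, Nat.sub_add_cancel (hs i hi)]
  field_simp

theorem exists_one_add_ne_zero_div_one_add_sq_eq {K : Type*} [Field K] [IsAlgClosed K] (w : K) :
    ∃ z : K, 1 + z ≠ 0 ∧ z / (1 + z) ^ 2 = w := by
  rcases eq_or_ne w 0 with rfl | hw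
  · exact ⟨0, by simp, by simp⟩
  obtain ⟨z, hz⟩ := IsAlgClosed.exists_root (C w * X ^ 2 + C (2 * w - 1) * X + C w)
    (by rw [degree_quadratic hw]; decide)
  simp only [IsRoot, eval_add, eval_mul, eval_C, eval_pow, eval_X] at hz
  have hz1 : 1 + z ≠ 0 := fun h => by
    rw [eq_neg_of_add_eq_zero_right h] at hz
    exact one_ne_zero (by linear_combination hz)
  exact ⟨z, hz1, by field_simp; linear_combination -hz⟩

theorem Complex.im_div_one_add_sq_eq_zero {z : ℂ} (hz : z.im = 0) : (z / (1 + z) ^ 2).im = 0 := by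
  obtain ⟨x, rfl⟩ : ∃ x : ℝ, z = x := ⟨z.re, Complex.ext rfl (by simp [hz])⟩
  exact_mod_cast Complex.ofReal_im (x / (1 + x) ^ 2)

theorem Complex.im_eq_zero_of_ofReal_mul_one_add_sq_eq {r : ℝ} (hr : r ≤ 0) {z : ℂ}
    (h : r * (1 + z) ^ 2 = z) : z.im = 0 := by
  have him := congrArg Complex.im h
  have hre := congrArg Complex.re h
  simp only [sq, Complex.mul_im, Complex.mul_re, Complex.add_re, Complex.add_im,
    Complex.ofReal_re, Complex.ofReal_im, Complex.one_re, Complex.one_im] at him hre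
  by_contra hb
  have hfac : z.im * (2 * r * (1 + z.re) - 1) = 0 := by linear_combination him
  have h2 : 2 * r * (1 + z.re) = 1 := sub_eq_zero.1 ((mul_eq_zero.1 hfac).resolve_left hb)
  -- Hence `re z < -1`, while the real part reads `(1 - re z) / 2 = r (im z)² ≤ 0`.
  nlinarith [mul_nonpos_of_nonpos_of_nonneg hr (sq_nonneg z.im)]

theorem sum_mul_pow_pos {s : Finset ℕ} {c : ℕ → ℝ} (hc : ∀ i ∈ s, 0 ≤ c i)
    (hne : ∃ i ∈ s, c i ≠ 0) {r : ℝ} (hr : 0 < r) : 0 < ∑ i ∈ s, c i * r ^ i := by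
  obtain ⟨j, hj, hcj⟩ := hne
  exact sum_pos' (fun i hi => mul_nonneg (hc i hi) (pow_nonneg hr.le i))
    ⟨j, hj, mul_pos ((hc j hj).lt_of_ne' hcj) (pow_pos hr j)⟩

theorem stmt_8_general (n : ℕ) (ξ : ℕ → ℝ)
    (hpos : ∀ i ∈ Finset.Icc 1 (n / 2), 0 ≤ ξ i)
    (hne : ∃ i ∈ Finset.Icc 1 (n / 2), ξ i ≠ 0) :
    ((∀ z : ℂ, aeval z (∑ i ∈ Finset.Icc 1 (n / 2),
          C (ξ i) * X ^ i * (1 + X) ^ (n - 2 * i)) = 0 → z.im = 0) ↔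
      (∀ z : ℂ, aeval z (∑ i ∈ Finset.Icc 1 (n / 2), C (ξ i) * X ^ i) = 0 → z.im = 0)) := by
  have hs : ∀ i ∈ Icc 1 (n / 2), 2 * i ≤ n := fun i hi => by
    have := (mem_Icc.1 hi).2
    omega
  constructor
  · intro hℓ w hw
    obtain ⟨z, hz1, rfl⟩ := exists_one_add_ne_zero_div_one_add_sq_eq w
    refine Complex.im_div_one_add_sq_eq_zero (hℓ z ?_)
    rw [aeval_sum_C_mul_X_pow_mul_one_add_X_pow hs _ hz1, hw, mul_zero]
  · intro hξ z hz
    rcases eq_or_ne (1 + z) 0 with hz1 | hz1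
    · simp [eq_neg_of_add_eq_zero_right hz1]
    rw [aeval_sum_C_mul_X_pow_mul_one_add_X_pow hs _ hz1] at hz
    have hw := (mul_eq_zero.1 hz).resolve_left (pow_ne_zero _ hz1)
    obtain ⟨r, hr⟩ : ∃ r : ℝ, z / (1 + z) ^ 2 = r :=
      ⟨_, Complex.ext rfl (by simp [hξ _ hw])⟩
    have hr0 : r ≤ 0 := by
      rw [hr] at hw
      simp only [map_sum, map_mul, aeval_C, map_pow, aeval_X, Complex.coe_algebraMap] at hw
      exact not_lt.1 fun hr0 => (sum_mul_pow_pos hpos hne hr0).ne' (by exact_mod_cast hw)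
    exact Complex.im_eq_zero_of_ofReal_mul_one_add_sq_eq hr0 (by rw [← hr]; field_simp)

theorem stmt_8 (n : ℕ) (hn : 2 ≤ n) (ξ : ℕ → ℝ)
    (hpos : ∀ i ∈ Finset.Icc 1 (n / 2), 0 ≤ ξ i)
    (hne : ∃ i ∈ Finset.Icc 1 (n / 2), ξ i ≠ 0) :
    ((∀ z : ℂ, aeval z (∑ i ∈ Finset.Icc 1 (n / 2),
          C (ξ i) * X ^ i * (1 + X) ^ (n - 2 * i)) = 0 → z.im = 0) ↔
      (∀ z : ℂ, aeval z (∑ i ∈ Finset.Icc 1 (n / 2), C (ξ i) * X ^ i) = 0 → z.im = 0)) :=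
  stmt_8_general n ξ hpos hne
end

section
/- For every nonnegative integer n, the identity \sum_{i=0}^{\lfloor n/2 \rfloor} \frac{1}{i+1} \binom{2i}{i} \binom{n}{2i} x^i (1+x)^{n-2i} = \sum_{i=0}^{n} \frac{1}{n+1} \binom{n+1}{i} \binom{n+1}{i+1} x^i holds as an identity of polynomials. -/
/-!
Compare coefficients of `x^k`. Since `C(2i,i) C(n,2i) C(n-2i,k-i) = C(n,k) C(k,i) C(n-k,i)`
(both count the ways to split `n` items into blocks of sizes `i, i, k-i, n-k-i`), the left side
contributes `C(n,k) ∑ᵢ C(k,i) C(n-k,i) / (i+1)`. Absorbing `1/(i+1)` into `C(n-k+1,i+1)/(n-k+1)`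
turns the sum into a Vandermonde convolution equal to `C(n+1,k+1)/(n-k+1)`, and
`C(n,k)/(n-k+1) = C(n+1,k)/(n+1)` gives the Narayana number.
-/

open Polynomial Finset

namespace Nat

theorem choose_mul_choose_sub_comm (n k i : ℕ) :
    n.choose i * (n - i).choose k = n.choose k * (n - k).choose i := by
  have hi := choose_mul (n := n) (k := k + i) (s := i) (by omega)
  have hk := choose_mul (n := n) (k := k + i) (s := k) (by omega)
  rw [← choose_symm_add, Nat.add_sub_cancel] at hi
  rw [Nat.add_sub_cancel_left] at hk
  rw [← hi, ← hk]

theorem choose_mul_choose_sub_eq_zero {n a b : ℕ} (h : n < a + b) :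
    n.choose a * (n - a).choose b = 0 := by
  rcases Nat.lt_or_ge n a with ha | ha
  · simp [choose_eq_zero_of_lt ha]
  · simp [choose_eq_zero_of_lt (show n - a < b by omega)]

theorem choose_two_mul_mul_choose_mul_choose_sub {n k i : ℕ} (hik : i ≤ k) :
    (2 * i).choose i * n.choose (2 * i) * (n - 2 * i).choose (k - i) =
      n.choose k * k.choose i * (n - k).choose i := by
  rcases Nat.lt_or_ge n (k + i) with hn | hn
  · rw [mul_assoc, choose_mul_choose_sub_eq_zero (by omega), mul_right_comm,
      choose_mul_choose_sub_eq_zero hn, mul_zero, zero_mul]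
  have h1 := choose_mul (n := n) (k := 2 * i) (s := i) (by omega)
  have h2 := choose_mul (n := n - i) (k := k) (s := i) hik
  rw [show 2 * i - i = i by omega] at h1
  rw [show n - i - i = n - 2 * i by omega] at h2
  calc (2 * i).choose i * n.choose (2 * i) * (n - 2 * i).choose (k - i)
      = n.choose i * ((n - i).choose i * (n - 2 * i).choose (k - i)) := by
        rw [mul_comm _ (n.choose _), h1, mul_assoc]
    _ = n.choose i * (n - i).choose k * k.choose i := by rw [← h2, mul_assoc]
    _ = n.choose k * k.choose i * (n - k).choose i := by rw [choose_mul_choose_sub_comm]; ring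

theorem sum_range_choose_mul_choose_succ (k m : ℕ) :
    ∑ i ∈ range (k + 1), k.choose i * m.choose (i + 1) = (m + k).choose (k + 1) := by
  rw [add_choose_eq, Finset.Nat.sum_antidiagonal_succ,
    Finset.Nat.sum_antidiagonal_eq_sum_range_succ_mk]
  simp only [choose_succ_self, mul_zero, zero_add]
  refine sum_congr rfl fun i hi => ?_
  rw [mul_comm, choose_symm (by simpa [Nat.lt_succ_iff] using hi)]

end Nat

theorem Polynomial.coeff_C_mul_X_pow_mul_one_add_X_pow {R : Type*} [Semiring R] (a : R)
    (i m k : ℕ) :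
    (C a * X ^ i * (1 + X) ^ m).coeff k = a * if i ≤ k then (m.choose (k - i) : R) else 0 := by
  rw [mul_assoc, coeff_C_mul, coeff_X_pow_mul', coeff_one_add_X_pow]

section

variable {K : Type*} [Field K] [CharZero K]

theorem sum_range_choose_mul_choose_div_succ {k m N : ℕ} (hN : min k m < N) :
    ∑ i ∈ range N, (k.choose i * m.choose i / (i + 1) : K) =
      (m + 1 + k).choose (k + 1) / (m + 1) := by
  have hvanish : ∀ i ≥ min k m + 1, (k.choose i * m.choose i / (i + 1) : K) = 0 := by
    intro i hi
    rcases min_choice k m with h | h <;> rw [h] at hi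
    · simp [Nat.choose_eq_zero_of_lt (show k < i by omega)]
    · simp [Nat.choose_eq_zero_of_lt (show m < i by omega)]
  have habsorb : ∀ i, (m.choose i / (i + 1) : K) = (m + 1).choose (i + 1) / (m + 1) := by
    intro i
    have := Nat.add_one_mul_choose_eq m i
    rw [div_eq_div_iff (Nat.cast_add_one_ne_zero i) (Nat.cast_add_one_ne_zero m), mul_comm]
    exact_mod_cast this
  rw [eventually_constant_sum hvanish (by omega),
    ← eventually_constant_sum hvanish (n := k + 1) (by omega)]
  simp_rw [mul_div_assoc, habsorb, ← mul_div_assoc, ← sum_div]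
  exact_mod_cast congrArg (fun t : ℕ => (t : K) / (m + 1))
    (Nat.sum_range_choose_mul_choose_succ k (m + 1))

theorem catalan_mul_choose_mul_ite_choose_eq (n k i : ℕ) :
    (1 / (i + 1 : K)) * (2 * i).choose i * n.choose (2 * i) *
        (if i ≤ k then ((n - 2 * i).choose (k - i) : K) else 0) =
      n.choose k * (k.choose i * (n - k).choose i / (i + 1)) := by
  split_ifs with hik
  · have h : ((2 * i).choose i * n.choose (2 * i) * (n - 2 * i).choose (k - i) : K) =
        n.choose k * k.choose i * (n - k).choose i := by
      exact_mod_cast Nat.choose_two_mul_mul_choose_mul_choose_sub hik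
    rw [← mul_div_assoc, ← mul_assoc, ← h]
    ring
  · simp [Nat.choose_eq_zero_of_lt (not_le.mp hik)]

theorem choose_div_sub_add_one {n k : ℕ} (hk : k ≤ n) :
    (n.choose k / ((n - k : ℕ) + 1) : K) = (n + 1).choose k / (n + 1) := by
  have h := Nat.choose_mul_succ_eq n k
  rw [show n + 1 - k = n - k + 1 by omega] at h
  rw [div_eq_div_iff (Nat.cast_add_one_ne_zero _) (Nat.cast_add_one_ne_zero n)]
  exact_mod_cast h

theorem sum_catalan_mul_choose_mul_X_pow_mul_one_add_X_pow (n : ℕ) :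
    (∑ i ∈ range (n / 2 + 1),
        C ((1 / (i + 1 : K)) * ((2 * i).choose i) * (n.choose (2 * i))) * X ^ i *
          (1 + X) ^ (n - 2 * i)) =
      ∑ i ∈ range (n + 1),
        C ((1 / (n + 1 : K)) * ((n + 1).choose i) * ((n + 1).choose (i + 1))) * X ^ i := by
  ext k
  simp only [finsetSum_coeff, coeff_C_mul_X_pow_mul_one_add_X_pow,
    catalan_mul_choose_mul_ite_choose_eq, coeff_C_mul_X_pow, sum_ite_eq, ← mul_sum, mem_range]
  split_ifs with hk
  · rw [sum_range_choose_mul_choose_div_succ (by omega), show n - k + 1 + k = n + 1 by omega,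
      mul_div_assoc', mul_div_right_comm, choose_div_sub_add_one (by omega)]
    ring
  · simp [Nat.choose_eq_zero_of_lt (show n < k by omega)]

end

theorem stmt_13 (n : ℕ) :
    (∑ i ∈ Finset.range (n / 2 + 1),
        C ((1 / (i + 1 : ℝ)) * ((2 * i).choose i) * (n.choose (2 * i))) * X ^ i *
          (1 + X) ^ (n - 2 * i)) =
      ∑ i ∈ Finset.range (n + 1),
        C ((1 / (n + 1 : ℝ)) * ((n + 1).choose i) * ((n + 1).choose (i + 1))) *
          (X : Polynomial ℝ) ^ i :=
  sum_catalan_mul_choose_mul_X_pow_mul_one_add_X_pow n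
end

section
/- For every integer n \ge 2, the polynomial \ell(\Gamma(D_n), x) = \sum_{i=1}^{\lfloor n/2 \rfloor} \frac{n-2}{i} \binom{2i-2}{i-1} \binom{n-2}{2i-2} x^i (1+x)^{n-2i} equals (n-2)\, x \sum_{i=0}^{n-2} \frac{1}{n-1} \binom{n-1}{i} \binom{n-1}{i+1} x^i. -/
/-! Write `n = m + 2`. Since `binom(2i-2, i-1) / i` is the Catalan number `C_{i-1}`, after
factoring out `(n - 2) x` the claim becomes the γ-expansion of the Narayana polynomial,
`∑ⱼ C_j binom(m, 2j) xʲ (1 + x)^(m-2j) = ∑ₜ binom(m+1, t) binom(m+1, t+1) / (m+1) · xᵗ`.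
On the coefficient of `xᵗ`, the identity `binom(n, k) binom(k, s) = binom(n, s) binom(n-s, k-s)`
turns `(m+1) C_j binom(m, 2j) binom(m-2j, t-j)` into `binom(m+1, t) binom(t, j) binom(m+1-t, j+1)`,
and Vandermonde's identity sums the latter over `j` to `binom(m+1, t) binom(m+1, t+1)`. -/

open Polynomial Finset

theorem Nat.sum_range_choose_mul_choose_succ_s14 (t s : ℕ) :
    ∑ j ∈ range (t + 1), t.choose j * s.choose (j + 1) = (t + s).choose (t + 1) := by
  rw [Nat.add_choose_eq, Finset.Nat.sum_antidiagonal_eq_sum_range_succ_mk, sum_range_succ _ (t + 1),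
    Nat.choose_succ_self, zero_mul, add_zero, ← sum_range_reflect]
  refine sum_congr rfl fun j hj => ?_
  have hjt : j ≤ t := Nat.lt_succ_iff.mp (mem_range.mp hj)
  rw [add_tsub_cancel_right, Nat.choose_symm hjt, show t - j + 1 = t + 1 - j by omega]

theorem Nat.sum_range_choose_mul_choose_succ_of_le {t s N : ℕ} (h : t < N ∨ s ≤ N) :
    ∑ j ∈ range N, t.choose j * s.choose (j + 1) = (t + s).choose (t + 1) := by
  rw [← Nat.sum_range_choose_mul_choose_succ_s14]
  rcases le_total N (t + 1) with hN | hN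
  · refine sum_subset (range_subset_range.mpr hN) fun j hj hjN => ?_
    simp only [mem_range] at hj hjN
    rw [Nat.choose_eq_zero_of_lt (n := s) (by omega), mul_zero]
  · refine (sum_subset (range_subset_range.mpr hN) fun j _ hjt => ?_).symm
    rw [Nat.choose_eq_zero_of_lt (by simpa using hjt), zero_mul]

theorem Nat.succ_mul_catalan_mul_choose_mul_choose {m t j : ℕ} (hjt : j ≤ t) :
    (m + 1) * (catalan j * m.choose (2 * j) * (m - 2 * j).choose (t - j)) =
      (m + 1).choose t * (t.choose j * (m + 1 - t).choose (j + 1)) := by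
  have hcat : (j + 1) * catalan j = (2 * j).choose j := by
    rw [succ_mul_catalan_eq_centralBinom, Nat.centralBinom_eq_two_mul_choose]
  have h₁ : m.choose (t + j) * (t + j).choose (2 * j) =
      m.choose (2 * j) * (m - 2 * j).choose (t - j) := by
    rw [Nat.choose_mul (by omega), show t + j - 2 * j = t - j by omega]
  have h₂ : (t + j).choose (2 * j) * (2 * j).choose j = (t + j).choose j * t.choose j := by
    rw [Nat.choose_mul (by omega), show t + j - j = t by omega, show 2 * j - j = j by omega]
  have h₃ := Nat.add_one_mul_choose_eq m (t + j)
  have h₄ := Nat.add_one_mul_choose_eq (t + j) j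
  have h₅ : (t + j + 1).choose (j + 1) = (t + j + 1).choose t :=
    Nat.choose_symm_of_eq_add (by omega)
  have h₆ : (m + 1).choose (t + j + 1) * (t + j + 1).choose t =
      (m + 1).choose t * (m + 1 - t).choose (j + 1) := by
    rw [Nat.choose_mul (by omega), show t + j + 1 - t = j + 1 by omega]
  refine Nat.eq_of_mul_eq_mul_left j.succ_pos ?_
  calc (j + 1) * ((m + 1) * (catalan j * m.choose (2 * j) * (m - 2 * j).choose (t - j)))
      = (m + 1) * (2 * j).choose j * (m.choose (2 * j) * (m - 2 * j).choose (t - j)) := by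
        linear_combination (m + 1) * m.choose (2 * j) * (m - 2 * j).choose (t - j) * hcat
    _ = (m + 1) * m.choose (t + j) * ((t + j).choose (2 * j) * (2 * j).choose j) := by
        linear_combination (m + 1) * (2 * j).choose j * h₁.symm
    _ = (m + 1) * m.choose (t + j) * (t + j).choose j * t.choose j := by
        linear_combination (m + 1) * m.choose (t + j) * h₂
    _ = (m + 1).choose (t + j + 1) * ((t + j + 1) * (t + j).choose j) * t.choose j := by
        linear_combination (t + j).choose j * t.choose j * h₃
    _ = (j + 1) * ((m + 1).choose (t + j + 1) * (t + j + 1).choose t) * t.choose j := by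
        linear_combination (m + 1).choose (t + j + 1) * t.choose j * (h₄ + (j + 1) * h₅)
    _ = (j + 1) * ((m + 1).choose t * (t.choose j * (m + 1 - t).choose (j + 1))) := by
        linear_combination (j + 1) * t.choose j * h₆

theorem Nat.succ_mul_sum_catalan_mul_choose (m t : ℕ) :
    (m + 1) * ∑ j ∈ range (m / 2 + 1),
        catalan j * m.choose (2 * j) * (if j ≤ t then (m - 2 * j).choose (t - j) else 0) =
      (m + 1).choose t * (m + 1).choose (t + 1) := by
  have hterm (j : ℕ) :
      (m + 1) * (catalan j * m.choose (2 * j) *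
          (if j ≤ t then (m - 2 * j).choose (t - j) else 0)) =
        (m + 1).choose t * (t.choose j * (m + 1 - t).choose (j + 1)) := by
    split_ifs with hjt
    · exact Nat.succ_mul_catalan_mul_choose_mul_choose hjt
    · rw [Nat.choose_eq_zero_of_lt (not_le.mp hjt)]
      simp
  rw [mul_sum, sum_congr rfl fun j _ => hterm j, ← mul_sum]
  rcases le_or_gt t (m + 1) with ht | ht
  · rw [Nat.sum_range_choose_mul_choose_succ_of_le (by omega), Nat.add_sub_cancel' ht]
  · simp [Nat.choose_eq_zero_of_lt ht]

theorem narayana_poly_gamma_expansion {K : Type*} [Field K] [CharZero K] (m : ℕ) :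
    ∑ j ∈ range (m / 2 + 1),
        C ((catalan j : K) * m.choose (2 * j)) * X ^ j * (1 + X) ^ (m - 2 * j) =
      ∑ t ∈ range (m + 1),
        C (1 / ((m : K) + 1) * (m + 1).choose t * (m + 1).choose (t + 1)) * X ^ t := by
  ext t
  have key := congrArg (Nat.cast : ℕ → K) (Nat.succ_mul_sum_catalan_mul_choose m t)
  push_cast [Nat.cast_ite, mul_ite, mul_zero, mul_assoc] at key
  simp only [finsetSum_coeff, mul_assoc, coeff_C_mul, coeff_X_pow_mul', coeff_one_add_X_pow,
    coeff_X_pow, mul_ite, mul_one, mul_zero, sum_ite_eq, mem_range]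
  have hm : (m : K) + 1 ≠ 0 := by exact_mod_cast m.succ_ne_zero
  split_ifs with ht
  · rw [← key, ← mul_assoc, one_div_mul_cancel hm, one_mul]
  · rw [Nat.choose_eq_zero_of_lt (by omega : m + 1 < t + 1), Nat.cast_zero, mul_zero] at key
    exact (mul_eq_zero.mp key).resolve_left hm

theorem stmt_14 (n : ℕ) (hn : 2 ≤ n) :
    (∑ i ∈ Finset.Icc 1 (n / 2),
        C (((n : ℝ) - 2) / i * ((2 * i - 2).choose (i - 1)) * ((n - 2).choose (2 * i - 2))) *
          X ^ i * (1 + X) ^ (n - 2 * i)) =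
      C ((n : ℝ) - 2) * X *
        ∑ i ∈ Finset.range (n - 1),
          C ((1 / ((n : ℝ) - 1)) * ((n - 1).choose i) * ((n - 1).choose (i + 1))) *
            (X : Polynomial ℝ) ^ i := by
  obtain ⟨m, rfl⟩ : ∃ m, n = m + 2 := ⟨n - 2, by omega⟩
  have hsub2 : ((m + 2 : ℕ) : ℝ) - 2 = m := by push_cast; ring
  have hsub1 : ((m + 2 : ℕ) : ℝ) - 1 = m + 1 := by push_cast; ring
  rw [hsub2, hsub1, show m + 2 - 2 = m by omega, show m + 2 - 1 = m + 1 by omega,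
    ← narayana_poly_gamma_expansion, mul_sum,
    show (m + 2) / 2 = m / 2 + 1 by omega, ← Ico_add_one_right_eq_Icc, sum_Ico_eq_sum_range,
    add_tsub_cancel_right]
  refine sum_congr rfl fun j _ => ?_
  have hcat : (m : ℝ) / ↑(j + 1) * (2 * j).choose j = m * catalan j := by
    rw [← Nat.centralBinom_eq_two_mul_choose, ← succ_mul_catalan_eq_centralBinom]
    push_cast
    field_simp
  rw [add_comm 1 j, show 2 * (j + 1) - 2 = 2 * j by omega, add_tsub_cancel_right,
    show m + 2 - 2 * (j + 1) = m - 2 * j by omega, hcat]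
  simp only [map_mul, pow_succ]
  ring
end

section
/- The polynomial 16x(1+x)^5 + 124x^2(1+x)^3 + 112x^3(1+x) has only real zeros. -/
lemma key_quad (u : ℝ) (hu : u < 0) (z : ℂ) (h : z = (u : ℂ) * (1 + z) ^ 2) :
    z.im = 0 := by
  set a := z.re
  set b := z.im
  have him : b = u * (2 * (1 + a) * b) := by
    have := congrArg Complex.im h
    simp [pow_two, Complex.add_im, Complex.mul_im, Complex.add_re, Complex.mul_re] at this
    linear_combination this
  have hre : a = u * ((1 + a) ^ 2 - b ^ 2) := by
    have := congrArg Complex.re h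
    simp [pow_two, Complex.add_re, Complex.mul_re, Complex.add_im, Complex.mul_im] at this
    ring_nf at this ⊢
    linarith [this]
  by_contra hb
  have hb2 : b ^ 2 > 0 := by positivity
  have h1 : 2 * u * (1 + a) = 1 := by
    have : b * (1 - u * (2 * (1 + a))) = 0 := by ring_nf; linarith [him]
    rcases mul_eq_zero.mp this with h | h
    · exact absurd h hb
    · nlinarith
  nlinarith [sq_nonneg (1 + a), hb2, hre, h1, mul_pos (neg_pos.mpr hu) hb2]

theorem stmt_18 :
    ∀ z : ℂ, 16 * z * (1 + z) ^ 5 + 124 * z ^ 2 * (1 + z) ^ 3 + 112 * z ^ 3 * (1 + z) = 0 →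
      z.im = 0 := by
  intro z hz
  set s : ℝ := Real.sqrt 513 with hs
  have hs2 : s ^ 2 = 513 := Real.sq_sqrt (by norm_num)
  have hslt : s < 31 := by nlinarith [Real.sqrt_nonneg (513 : ℝ)]
  have hsnn : 0 ≤ s := Real.sqrt_nonneg _
  set u₁ : ℝ := (-31 + s) / 56 with hu1
  set u₂ : ℝ := (-31 - s) / 56 with hu2
  have hu1neg : u₁ < 0 := by rw [hu1]; linarith
  have hu2neg : u₂ < 0 := by rw [hu2]; linarith
  have hS2 : ((s : ℂ)) ^ 2 = 513 := by exact_mod_cast congrArg (Complex.ofReal) hs2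
  have hfac : 112 * z * (1 + z) * (z - (u₁ : ℂ) * (1 + z) ^ 2) * (z - (u₂ : ℂ) * (1 + z) ^ 2) = 0 := by
    rw [hu1, hu2]
    push_cast
    linear_combination hz - (z * (1 + z) ^ 5 / 28) * hS2
  rcases mul_eq_zero.mp hfac with h | h
  · rcases mul_eq_zero.mp h with h | h
    · rcases mul_eq_zero.mp h with h | h
      · have : z = 0 := by
          rcases mul_eq_zero.mp h with h | h
          · exact absurd h (by norm_num)
          · exact h
        simp [this]
      · have : z = -1 := by linear_combination h
        simp [this]
    · exact key_quad u₁ hu1neg z (by linear_combination h)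
  · exact key_quad u₂ hu2neg z (by linear_combination h)
end

section
/- The polynomial 7x(1+x)^4 + 35x^2(1+x)^2 + 13x^3 has only real zeros. -/
lemma quad_real (a : ℝ) (ha : 4 < a ^ 2) (z : ℂ) (hz : z ^ 2 + (a : ℂ) * z + 1 = 0) :
    z.im = 0 := by
  have him := congrArg Complex.im hz
  have hre := congrArg Complex.re hz
  simp [Complex.add_im, Complex.add_re, Complex.mul_im, Complex.mul_re, pow_two] at him hre
  by_contra hy
  have hx : z.re = -a / 2 := by
    have : z.im * (2 * z.re + a) = 0 := by linarith [him]
    rcases mul_eq_zero.1 this with h | h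
    · exact absurd h hy
    · linarith
  rw [hx] at hre
  nlinarith [sq_nonneg z.im, sq_abs z.im]

theorem stmt_19 :
    ∀ z : ℂ, 7 * z * (1 + z) ^ 4 + 35 * z ^ 2 * (1 + z) ^ 2 + 13 * z ^ 3 = 0 → z.im = 0 := by
  intro z hz
  set s : ℝ := Real.sqrt (123 / 7) with hs_def
  have hs0 : (0 : ℝ) ≤ s := Real.sqrt_nonneg _
  have hs2 : s ^ 2 = 123 / 7 := Real.sq_sqrt (by norm_num)
  have hs2c : ((s : ℂ)) ^ 2 = 123 / 7 := by
    rw [← Complex.ofReal_pow, hs2]; norm_num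
  have hfact : 7 * z * (1 + z) ^ 4 + 35 * z ^ 2 * (1 + z) ^ 2 + 13 * z ^ 3 =
      7 * z * (z ^ 2 + (((9 + s) / 2 : ℝ) : ℂ) * z + 1) *
        (z ^ 2 + (((9 - s) / 2 : ℝ) : ℂ) * z + 1) := by
    push_cast
    linear_combination (7 * z ^ 3 / 4) * hs2c
  rw [hfact] at hz
  rcases mul_eq_zero.1 hz with h | h
  · rcases mul_eq_zero.1 h with h | h
    · have : z = 0 := by
        simpa using h
      simp [this]
    · exact quad_real _ (by nlinarith) z h
  · exact quad_real _ (by nlinarith) z h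
end
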